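/- For n ≥ 1, the number S_n of ordered increasing k-trees of size n whose root-clique has exactly one child equals (n-1)! · (k+1)^{n-1} · binom(n-1 - 1/(k+1), n-1). -/

import Mathlib

/-- Generalized binomial coefficient `binom(x, n) = x(x-1)⋯(x-n+1)/n!`. -/
noncomputable def gbinom (x : ℝ) (n : ℕ) : ℝ :=
  (∏ i ∈ Finset.range n, (x - i)) / (Nat.factorial n)

/-!
With `c = k + 1`, the `n`-th derivative of `(1 - c z) ^ (1/c)` at `0` is the falling factorial
`(1/c)^{(n)}` times `(-c)^n`. Peeling off the first factor, `(1/c)^{(m+1)} = (-1)^m (1/c) (m - 1/c)^{(m)}`,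
and `(m - 1/c)^{(m)} = m! · binom(m - 1/c, m)`; the signs and the factor `1/c` cancel.
-/

open Filter Topology Polynomial

theorem iteratedDeriv_rpow_affine (a b p : ℝ) (n : ℕ) {z : ℝ} (hz : 0 < a + b * z) :
    iteratedDeriv n (fun w => (a + b * w) ^ p) z
      = (descPochhammer ℝ n).eval p * b ^ n * (a + b * z) ^ (p - n) := by
  induction n generalizing z with
  | zero => simp
  | succ n ih =>
    have hpos : {w : ℝ | 0 < a + b * w} ∈ 𝓝 z :=
      (isOpen_lt continuous_const (by fun_prop)).mem_nhds hz
    rw [iteratedDeriv_succ, (eventuallyEq_of_mem hpos fun w hw => ih hw).deriv_eq]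
    have hlin : HasDerivAt (fun w => a + b * w) b z := by
      simpa using ((hasDerivAt_id z).const_mul b).const_add a
    rw [((hlin.rpow_const (Or.inl hz.ne')).const_mul _).deriv, descPochhammer_succ_eval,
      Nat.cast_succ, ← sub_sub]
    ring

theorem descPochhammer_succ_eval_eq_neg_one_pow_mul {R : Type*} [CommRing R] (r : R) (m : ℕ) :
    (descPochhammer R (m + 1)).eval r = (-1) ^ m * r * (descPochhammer R m).eval ((m : R) - r) := by
  rw [descPochhammer_succ_left, eval_mul, eval_X, eval_comp, eval_sub, eval_X, eval_one,
    descPochhammer_eval_eq_ascPochhammer R ((m : R) - r), sub_sub_cancel_left, neg_add_eq_sub,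
    ← neg_sub r 1, ascPochhammer_eval_neg_eq_descPochhammer]
  linear_combination (-r * (descPochhammer R m).eval (r - 1)) *
    (even_two_mul m).neg_one_pow (α := R)

theorem gbinom_eq_descPochhammer_eval_div (x : ℝ) (n : ℕ) :
    gbinom x n = (descPochhammer ℝ n).eval x / n.factorial := by
  rw [gbinom, descPochhammer_eval_eq_prod_range]

theorem ktree_S_count (k n : ℕ) (hn : 1 ≤ n) :
    iteratedDeriv n (fun z : ℝ => 1 - (1 - ((k : ℝ) + 1) * z) ^ ((1 : ℝ) / ((k : ℝ) + 1))) 0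
      = (Nat.factorial (n - 1) : ℝ) * ((k : ℝ) + 1) ^ (n - 1)
          * gbinom ((n : ℝ) - 1 - 1 / ((k : ℝ) + 1)) (n - 1) := by
  obtain ⟨m, rfl⟩ := Nat.exists_eq_add_of_le' hn
  set c : ℝ := k + 1
  have hc : c ≠ 0 := by positivity
  have hderiv : iteratedDeriv (m + 1) (fun z => (1 - c * z) ^ (1 / c)) 0
      = (descPochhammer ℝ (m + 1)).eval (1 / c) * (-c) ^ (m + 1) := by
    simpa [sub_eq_add_neg] using
      iteratedDeriv_rpow_affine 1 (-c) (1 / c) (m + 1) (z := 0) (by simp)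
  rw [iteratedDeriv_const_sub m.succ_pos, iteratedDeriv_neg, hderiv,
    descPochhammer_succ_eval_eq_neg_one_pow_mul, gbinom_eq_descPochhammer_eval_div,
    Nat.add_sub_cancel, Nat.cast_add_one, add_sub_cancel_right, neg_pow c]
  generalize (descPochhammer ℝ m).eval _ = E
  field_simp
  linear_combination E * c ^ (m + 1) * (even_two_mul m).neg_one_pow (α := ℝ)
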